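/- arXiv:1106.3981 — 3 statements merged into one kernel-verified Lean document; each statement's English description precedes it below -/
import Mathlib

section
/- Let ℓ ≥ 1 be an integer. Fix j with 0 ≤ j < ℓ, an integer k ≥ 1 with j + k ≤ ℓ, and an integer m ≥ 1 with k − m ≥ 0. Then there is a group isomorphism X_{j-1}(X_j ∩ Y_k) / X_{j-1}(X_j ∩ Y_{k-m}) ≅ X_j(X_{j+1} ∩ Y_{k-1}) / X_j(X_{j+1} ∩ Y_{k-m-1}) (all four set products are normal subgroups of B, so these quotient groups are defined; here Y_{-1} = 1). -/
open Pointwise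

namespace GroupCodes

variable {S : Type*} [Group S]

/-- The subgroups `Xₙ` of the branch group `B ≤ S × S`: `X₀ = {b ∈ B : b⁻ = 1}` and
`X_{n+1} = {b ∈ B : b⁻ ∈ Xₙ⁺}` (here `b⁻ = b.1`, `b⁺ = b.2`, `U⁺ = snd '' U`). -/
def Xnat (B : Subgroup (S × S)) : ℕ → Subgroup (S × S)
  | 0 => B ⊓ (MonoidHom.fst S S).ker
  | n + 1 => B ⊓ (Subgroup.map (MonoidHom.snd S S) (Xnat B n)).comap (MonoidHom.fst S S)

/-- The subgroups `Yₙ` of the branch group `B ≤ S × S`: `Y₀ = {b ∈ B : b⁺ = 1}` and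
`Y_{n+1} = {b ∈ B : b⁺ ∈ Yₙ⁻}`. -/
def Ynat (B : Subgroup (S × S)) : ℕ → Subgroup (S × S)
  | 0 => B ⊓ (MonoidHom.snd S S).ker
  | n + 1 => B ⊓ (Subgroup.map (MonoidHom.fst S S) (Ynat B n)).comap (MonoidHom.snd S S)

/-- `X i` for an integer index `i`, trivial for `i < 0`. -/
def X (B : Subgroup (S × S)) (i : ℤ) : Subgroup (S × S) :=
  if i < 0 then ⊥ else Xnat B i.toNat

/-- `Y i` for an integer index `i`, trivial for `i < 0`. -/
def Y (B : Subgroup (S × S)) (i : ℤ) : Subgroup (S × S) :=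
  if i < 0 then ⊥ else Ynat B i.toNat

/-- The next-branch set `N(U) = {b ∈ B : b⁻ ∈ U⁺}`. -/
def N (B U : Subgroup (S × S)) : Subgroup (S × S) :=
  B ⊓ (Subgroup.map (MonoidHom.snd S S) U).comap (MonoidHom.fst S S)

/-- The previous-branch set `P(U) = {b ∈ B : b⁺ ∈ U⁻}`. -/
def P (B U : Subgroup (S × S)) : Subgroup (S × S) :=
  B ⊓ (Subgroup.map (MonoidHom.fst S S) U).comap (MonoidHom.snd S S)

/-- `IsQuotIso J H J' H'` says that `J` (viewed inside `H`) is normal in `H`, `J'` is normal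
in `H'`, and there is a group isomorphism `H / J ≅ H' / J'`. -/
def IsQuotIso {G₁ G₂ : Type*} [Group G₁] [Group G₂]
    (J H : Subgroup G₁) (J' H' : Subgroup G₂) : Prop :=
  (J.subgroupOf H).Normal ∧ (J'.subgroupOf H').Normal ∧
    ∀ [(J.subgroupOf H).Normal] [(J'.subgroupOf H').Normal],
      Nonempty ((H ⧸ J.subgroupOf H) ≃* (H' ⧸ J'.subgroupOf H'))

/-- `T` is a right transversal of `J` inside `H`: `T ⊆ H` and `T` meets every right coset
of `J` contained in `H` in exactly one element. -/
def IsRightTransversalIn {G : Type*} [Group G] (J H : Subgroup G) (T : Set G) : Prop :=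
  T ⊆ (H : Set G) ∧ ∀ h ∈ H, ∃! t, t ∈ T ∧ t * h⁻¹ ∈ J

/-- The group of trellis path segments `(b₀, …, bₙ)` with `b_j ∈ F j` and matching states
`b_j⁺ = b_{j+1}⁻`; a subgroup of the direct product `(S × S)^{n+1}`. -/
def chainSubgroup (n : ℕ) (F : ℤ → Subgroup (S × S)) : Subgroup (Fin (n + 1) → S × S) where
  carrier := {b | (∀ i : Fin (n + 1), b i ∈ F (i : ℤ)) ∧
    ∀ i : Fin n, (b i.castSucc).2 = (b i.succ).1}
  one_mem' := ⟨fun _ => one_mem _, fun _ => rfl⟩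
  mul_mem' := by
    rintro a b ⟨ha1, ha2⟩ ⟨hb1, hb2⟩
    refine ⟨fun i => mul_mem (ha1 i) (hb1 i), fun i => ?_⟩
    simp only [Pi.mul_apply, Prod.snd_mul, Prod.fst_mul, ha2 i, hb2 i]
  inv_mem' := by
    rintro a ⟨ha1, ha2⟩
    refine ⟨fun i => inv_mem (ha1 i), fun i => ?_⟩
    simp only [Pi.inv_apply, Prod.snd_inv, Prod.fst_inv, ha2 i]

/-- `U ⨝ N(U)`: the group of trellis path segments `(b, b')` of length two with `b ∈ U`,
`b' ∈ N(U)` and `b⁺ = b'⁻`; a subgroup of the direct product `(S × S) × (S × S)`. -/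
def JoinN (B U : Subgroup (S × S)) : Subgroup ((S × S) × (S × S)) where
  carrier := {p | p.1 ∈ U ∧ p.2 ∈ N B U ∧ p.1.2 = p.2.1}
  one_mem' := ⟨one_mem _, one_mem _, rfl⟩
  mul_mem' := by
    rintro a b ⟨ha1, ha2, ha3⟩ ⟨hb1, hb2, hb3⟩
    exact ⟨mul_mem ha1 hb1, mul_mem ha2 hb2, by
      simp only [Prod.fst_mul, Prod.snd_mul, ha3, hb3]⟩
  inv_mem' := by
    rintro a ⟨ha1, ha2, ha3⟩
    exact ⟨inv_mem ha1, inv_mem ha2, by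
      simp only [Prod.fst_inv, Prod.snd_inv, ha3]⟩

section Generic

variable {G T : Type*} [Group G] [Group T]

lemma subgroupOf_normal_of_conj {B J H : Subgroup G} (hHB : H ≤ B)
    (hJ : ∀ b ∈ B, ∀ u ∈ J, b * u * b⁻¹ ∈ J) : (J.subgroupOf H).Normal := by
  constructor
  intro n hn g
  simp only [Subgroup.mem_subgroupOf] at hn ⊢
  exact hJ g (hHB g.2) n hn

lemma conj_sup {B U V : Subgroup G}
    (hU : ∀ b ∈ B, ∀ u ∈ U, b * u * b⁻¹ ∈ U)
    (hV : ∀ b ∈ B, ∀ u ∈ V, b * u * b⁻¹ ∈ V) :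
    ∀ b ∈ B, ∀ u ∈ U ⊔ V, b * u * b⁻¹ ∈ U ⊔ V := by
  intro b hb u hu
  have h1 : Subgroup.map (MulAut.conj b).toMonoidHom U ≤ U := by
    rintro _ ⟨x, hx, rfl⟩
    simpa using hU b hb x hx
  have h2 : Subgroup.map (MulAut.conj b).toMonoidHom V ≤ V := by
    rintro _ ⟨x, hx, rfl⟩
    simpa using hV b hb x hx
  have h3 : Subgroup.map (MulAut.conj b).toMonoidHom (U ⊔ V) ≤ U ⊔ V := by
    rw [Subgroup.map_sup]
    exact sup_le (h1.trans le_sup_left) (h2.trans le_sup_right)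
  exact h3 ⟨u, hu, by simp⟩

lemma map_normal_of_conj {f : G →* T} {B U : Subgroup G} (hUB : U ≤ B)
    (hU : ∀ b ∈ B, ∀ u ∈ U, b * u * b⁻¹ ∈ U) (hBsurj : B.map f = ⊤) :
    (U.map f).Normal := by
  constructor
  rintro _ ⟨u, hu, rfl⟩ s
  have hs : s ∈ B.map f := hBsurj ▸ Subgroup.mem_top s
  obtain ⟨b, hb, rfl⟩ := hs
  exact ⟨b * u * b⁻¹, hU b hb u hu, by simp⟩

lemma quotEquivMap (f : G →* T) (J H : Subgroup G)
    (hJH : J ≤ H)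
    (hker : ∀ h ∈ H, f h ∈ J.map f → h ∈ J)
    [(J.subgroupOf H).Normal]
    [((J.map f).subgroupOf (H.map f)).Normal] :
    Nonempty ((H ⧸ J.subgroupOf H) ≃* (H.map f ⧸ (J.map f).subgroupOf (H.map f))) := by
  let ψ : H →* H.map f ⧸ (J.map f).subgroupOf (H.map f) :=
    (QuotientGroup.mk' _).comp (f.subgroupMap H)
  have hsurj : Function.Surjective ψ :=
    (QuotientGroup.mk'_surjective _).comp (f.subgroupMap_surjective H)
  have hker' : J.subgroupOf H = ψ.ker := by
    ext h
    simp only [ψ, MonoidHom.mem_ker, MonoidHom.comp_apply, QuotientGroup.mk'_apply,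
      QuotientGroup.eq_one_iff, Subgroup.mem_subgroupOf]
    constructor
    · intro hh
      exact ⟨h, hh, rfl⟩
    · intro hh
      exact hker h h.2 hh
  exact ⟨(QuotientGroup.quotientMulEquivOfEq hker').trans
    (QuotientGroup.quotientKerEquivOfSurjective ψ hsurj)⟩

lemma quotEquivMap' (f : G →* T) (J H : Subgroup G) (L K : Subgroup T)
    (hK : H.map f = K) (hL : J.map f = L)
    (hJH : J ≤ H)
    (hker : ∀ h ∈ H, f h ∈ J.map f → h ∈ J)
    [(J.subgroupOf H).Normal]
    [(L.subgroupOf K).Normal] :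
    Nonempty ((H ⧸ J.subgroupOf H) ≃* (K ⧸ L.subgroupOf K)) := by
  subst hK hL
  exact quotEquivMap f J H hJH hker

end Generic

variable {B : Subgroup (S × S)}
variable {B : Subgroup (S × S)}

lemma mem_Xnat_succ {n : ℕ} {b : S × S} :
    b ∈ Xnat B (n + 1) ↔ b ∈ B ∧ b.1 ∈ (Xnat B n).map (MonoidHom.snd S S) := Iff.rfl

lemma mem_Xnat_zero {b : S × S} : b ∈ Xnat B 0 ↔ b ∈ B ∧ b.1 = 1 := Iff.rfl

lemma mem_Ynat_succ {n : ℕ} {b : S × S} :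
    b ∈ Ynat B (n + 1) ↔ b ∈ B ∧ b.2 ∈ (Ynat B n).map (MonoidHom.fst S S) := Iff.rfl

lemma mem_Ynat_zero {b : S × S} : b ∈ Ynat B 0 ↔ b ∈ B ∧ b.2 = 1 := Iff.rfl

lemma Xnat_le_B (n : ℕ) : Xnat B n ≤ B := by cases n <;> exact inf_le_left
lemma Ynat_le_B (n : ℕ) : Ynat B n ≤ B := by cases n <;> exact inf_le_left

lemma Xnat_le_succ : ∀ n, Xnat B n ≤ Xnat B (n + 1) := by
  intro n
  induction n with
  | zero => exact fun b hb => ⟨hb.1, 1, one_mem _, hb.2.symm⟩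
  | succ n ih =>
    rintro b ⟨hbB, c, hc, hc2⟩
    exact ⟨hbB, c, ih hc, hc2⟩

lemma Ynat_le_succ : ∀ n, Ynat B n ≤ Ynat B (n + 1) := by
  intro n
  induction n with
  | zero => exact fun b hb => ⟨hb.1, 1, one_mem _, hb.2.symm⟩
  | succ n ih =>
    rintro b ⟨hbB, c, hc, hc2⟩
    exact ⟨hbB, c, ih hc, hc2⟩

lemma Xnat_mono : Monotone (Xnat B) := monotone_nat_of_le_succ Xnat_le_succ

lemma Ynat_mono : Monotone (Ynat B) := monotone_nat_of_le_succ Ynat_le_succ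

lemma Xnat_conj (hB2 : Subgroup.map (MonoidHom.snd S S) B = ⊤) :
    ∀ n, ∀ b ∈ B, ∀ x ∈ Xnat B n, b * x * b⁻¹ ∈ Xnat B n := by
  intro n
  induction n with
  | zero =>
    intro b hb x hx
    refine Subgroup.mem_inf.mpr ⟨mul_mem (mul_mem hb (Subgroup.mem_inf.mp hx).1) (inv_mem hb), ?_⟩
    have h1 : x.1 = 1 := hx.2
    show (b * x * b⁻¹).1 = 1
    simp [Prod.fst_mul, Prod.fst_inv, h1]
  | succ n ih =>
    intro b hb x hx
    obtain ⟨hxB, hx2⟩ := Subgroup.mem_inf.mp hx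
    obtain ⟨c, hc, hc2⟩ := Subgroup.mem_comap.mp hx2
    have hc2' : c.2 = x.1 := hc2
    have hmem : (b.1 : S) ∈ Subgroup.map (MonoidHom.snd S S) B := hB2 ▸ Subgroup.mem_top _
    obtain ⟨d, hd, hd2⟩ := hmem
    have hd2' : d.2 = b.1 := hd2
    refine Subgroup.mem_inf.mpr ⟨mul_mem (mul_mem hb hxB) (inv_mem hb),
      Subgroup.mem_comap.mpr ⟨d * c * d⁻¹, ih d hd c hc, ?_⟩⟩
    show (d * c * d⁻¹).2 = (b * x * b⁻¹).1
    simp [Prod.fst_mul, Prod.snd_mul, Prod.fst_inv, Prod.snd_inv, hd2', hc2']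

lemma Ynat_conj (hB1 : Subgroup.map (MonoidHom.fst S S) B = ⊤) :
    ∀ n, ∀ b ∈ B, ∀ x ∈ Ynat B n, b * x * b⁻¹ ∈ Ynat B n := by
  intro n
  induction n with
  | zero =>
    intro b hb x hx
    refine Subgroup.mem_inf.mpr ⟨mul_mem (mul_mem hb (Subgroup.mem_inf.mp hx).1) (inv_mem hb), ?_⟩
    have h1 : x.2 = 1 := hx.2
    show (b * x * b⁻¹).2 = 1
    simp [Prod.snd_mul, Prod.snd_inv, h1]
  | succ n ih =>
    intro b hb x hx
    obtain ⟨hxB, hx2⟩ := Subgroup.mem_inf.mp hx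
    obtain ⟨c, hc, hc2⟩ := Subgroup.mem_comap.mp hx2
    have hc2' : c.1 = x.2 := hc2
    have hmem : (b.2 : S) ∈ Subgroup.map (MonoidHom.fst S S) B := hB1 ▸ Subgroup.mem_top _
    obtain ⟨d, hd, hd2⟩ := hmem
    have hd2' : d.1 = b.2 := hd2
    refine Subgroup.mem_inf.mpr ⟨mul_mem (mul_mem hb hxB) (inv_mem hb),
      Subgroup.mem_comap.mpr ⟨d * c * d⁻¹, ih d hd c hc, ?_⟩⟩
    show (d * c * d⁻¹).1 = (b * x * b⁻¹).2
    simp [Prod.fst_mul, Prod.snd_mul, Prod.fst_inv, Prod.snd_inv, hd2', hc2']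

lemma map_fst_Xnat_zero : (Xnat B 0).map (MonoidHom.fst S S) = ⊥ := by
  rw [eq_bot_iff]
  rintro _ ⟨x, hx, rfl⟩
  exact hx.2

lemma map_fst_Xnat_succ (hB1 : Subgroup.map (MonoidHom.fst S S) B = ⊤) (n : ℕ) :
    (Xnat B (n + 1)).map (MonoidHom.fst S S) = (Xnat B n).map (MonoidHom.snd S S) := by
  ext s
  constructor
  · rintro ⟨b, hb, rfl⟩
    exact hb.2
  · intro hs
    have : s ∈ Subgroup.map (MonoidHom.fst S S) B := hB1 ▸ Subgroup.mem_top _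
    obtain ⟨b, hb, rfl⟩ := this
    exact ⟨b, ⟨hb, hs⟩, rfl⟩

lemma map_cross (n k : ℕ) :
    (Xnat B (n + 1) ⊓ Ynat B k).map (MonoidHom.fst S S)
      = (Xnat B n ⊓ Ynat B (k + 1)).map (MonoidHom.snd S S) := by
  ext s
  constructor
  · rintro ⟨b, ⟨hbX, hbY⟩, rfl⟩
    obtain ⟨hbB, c, hc, hc2⟩ := hbX
    exact ⟨c, ⟨hc, Xnat_le_B n hc, ⟨b, hbY, hc2 ▸ rfl⟩⟩, hc2⟩
  · rintro ⟨c, ⟨hcX, hcY⟩, rfl⟩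
    obtain ⟨hcB, b, hb, hb2⟩ := hcY
    exact ⟨b, ⟨⟨Ynat_le_B k hb, c, hcX, hb2.symm⟩, hb⟩, hb2⟩

lemma map_snd_inf_Ynat_zero (U : Subgroup (S × S)) :
    (U ⊓ Ynat B 0).map (MonoidHom.snd S S) = ⊥ := by
  rw [eq_bot_iff]
  rintro _ ⟨x, ⟨_, hx⟩, rfl⟩
  exact hx.2

-- integer level
lemma X_nonneg {i : ℤ} (hi : 0 ≤ i) : X B i = Xnat B i.toNat := if_neg (by omega)
lemma X_neg {i : ℤ} (hi : i < 0) : X B i = ⊥ := if_pos hi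
lemma Y_nonneg {i : ℤ} (hi : 0 ≤ i) : Y B i = Ynat B i.toNat := if_neg (by omega)
lemma Y_neg {i : ℤ} (hi : i < 0) : Y B i = ⊥ := if_pos hi

lemma map_fst_X (hB1 : Subgroup.map (MonoidHom.fst S S) B = ⊤) (i : ℤ) :
    (X B (i + 1)).map (MonoidHom.fst S S) = (X B i).map (MonoidHom.snd S S) := by
  rcases lt_trichotomy i (-1) with h | h | h
  · rw [X_neg (by omega), X_neg (by omega), Subgroup.map_bot, Subgroup.map_bot]
  · subst h
    rw [X_neg (i := -1) (by norm_num), show (-1 : ℤ) + 1 = (0 : ℤ) by norm_num,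
      X_nonneg (i := 0) le_rfl, Subgroup.map_bot]
    exact map_fst_Xnat_zero
  · have hi : 0 ≤ i := by omega
    rw [X_nonneg (by omega), X_nonneg hi,
      show (i + 1).toNat = i.toNat + 1 by omega]
    exact map_fst_Xnat_succ hB1 i.toNat

lemma map_cross_int (i k : ℤ) (hi : 0 ≤ i) (hk : 0 ≤ k) :
    (X B (i + 1) ⊓ Y B (k - 1)).map (MonoidHom.fst S S)
      = (X B i ⊓ Y B k).map (MonoidHom.snd S S) := by
  rcases eq_or_lt_of_le hk with h | h
  · rw [← h, Y_neg (by omega), Y_nonneg le_rfl, X_nonneg hi, inf_bot_eq, Subgroup.map_bot]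
    exact (map_snd_inf_Ynat_zero _).symm
  · have hk1 : 0 ≤ k - 1 := by omega
    rw [X_nonneg (by omega), X_nonneg hi, Y_nonneg hk1, Y_nonneg hk,
      show (i + 1).toNat = i.toNat + 1 by omega,
      show k.toNat = (k - 1).toNat + 1 by omega]
    exact map_cross i.toNat (k - 1).toNat


lemma conj_inf {G : Type*} [Group G] {B U V : Subgroup G}
    (hU : ∀ b ∈ B, ∀ u ∈ U, b * u * b⁻¹ ∈ U)
    (hV : ∀ b ∈ B, ∀ u ∈ V, b * u * b⁻¹ ∈ V) :
    ∀ b ∈ B, ∀ u ∈ U ⊓ V, b * u * b⁻¹ ∈ U ⊓ V := fun b hb u hu =>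
  Subgroup.mem_inf.mpr ⟨hU b hb u (Subgroup.mem_inf.mp hu).1, hV b hb u (Subgroup.mem_inf.mp hu).2⟩

lemma X_mono {B : Subgroup (S × S)} {i i' : ℤ} (h : i ≤ i') : X B i ≤ X B i' := by
  rcases lt_or_ge i 0 with hi | hi
  · rw [X_neg hi]; exact bot_le
  · rw [X_nonneg hi, X_nonneg (le_trans hi h)]
    exact Xnat_mono (by omega)

lemma Y_mono {B : Subgroup (S × S)} {i i' : ℤ} (h : i ≤ i') : Y B i ≤ Y B i' := by
  rcases lt_or_ge i 0 with hi | hi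
  · rw [Y_neg hi]; exact bot_le
  · rw [Y_nonneg hi, Y_nonneg (le_trans hi h)]
    exact Ynat_mono (by omega)

lemma X_le_B {B : Subgroup (S × S)} (i : ℤ) : X B i ≤ B := by
  rcases lt_or_ge i 0 with hi | hi
  · rw [X_neg hi]; exact bot_le
  · rw [X_nonneg hi]; exact Xnat_le_B _

lemma Y_le_B {B : Subgroup (S × S)} (i : ℤ) : Y B i ≤ B := by
  rcases lt_or_ge i 0 with hi | hi
  · rw [Y_neg hi]; exact bot_le
  · rw [Y_nonneg hi]; exact Ynat_le_B _

lemma X_conj {B : Subgroup (S × S)} (hB2 : Subgroup.map (MonoidHom.snd S S) B = ⊤) (i : ℤ) :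
    ∀ b ∈ B, ∀ x ∈ X B i, b * x * b⁻¹ ∈ X B i := by
  rcases lt_or_ge i 0 with hi | hi
  · rw [X_neg hi]
    intro b _ x hx
    rw [Subgroup.mem_bot] at hx ⊢
    simp [hx]
  · rw [X_nonneg hi]
    exact Xnat_conj hB2 _

lemma Y_conj {B : Subgroup (S × S)} (hB1 : Subgroup.map (MonoidHom.fst S S) B = ⊤) (i : ℤ) :
    ∀ b ∈ B, ∀ x ∈ Y B i, b * x * b⁻¹ ∈ Y B i := by
  rcases lt_or_ge i 0 with hi | hi
  · rw [Y_neg hi]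
    intro b _ x hx
    rw [Subgroup.mem_bot] at hx ⊢
    simp [hx]
  · rw [Y_nonneg hi]
    exact Ynat_conj hB1 _

/-- the rectangle isomorphism between adjacent columns of the Schreier matrix:
`X_{j-1}(X_j ∩ Y_k) / X_{j-1}(X_j ∩ Y_{k-m}) ≅ X_j(X_{j+1} ∩ Y_{k-1}) / X_j(X_{j+1} ∩ Y_{k-m-1})`
(set products of normal subgroups, realized as joins). -/
theorem schreier_rectangle_iso
    (B : Subgroup (S × S))
    (hB1 : Subgroup.map (MonoidHom.fst S S) B = ⊤)
    (hB2 : Subgroup.map (MonoidHom.snd S S) B = ⊤)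
    (ℓ j k m : ℤ) (hℓ : 1 ≤ ℓ)
    (hj0 : 0 ≤ j) (hjℓ : j < ℓ)
    (hk : 1 ≤ k) (hjk : j + k ≤ ℓ)
    (hm : 1 ≤ m) (hkm : 0 ≤ k - m) :
    IsQuotIso
      (X B (j - 1) ⊔ (X B j ⊓ Y B (k - m)))
      (X B (j - 1) ⊔ (X B j ⊓ Y B k))
      (X B j ⊔ (X B (j + 1) ⊓ Y B (k - m - 1)))
      (X B j ⊔ (X B (j + 1) ⊓ Y B (k - 1))) := by
  set J₁ := X B (j - 1) ⊔ (X B j ⊓ Y B (k - m)) with hJ₁def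
  set H₁ := X B (j - 1) ⊔ (X B j ⊓ Y B k) with hH₁def
  set J₂ := X B j ⊔ (X B (j + 1) ⊓ Y B (k - m - 1)) with hJ₂def
  set H₂ := X B j ⊔ (X B (j + 1) ⊓ Y B (k - 1)) with hH₂def
  have cJ₁ : ∀ b ∈ B, ∀ u ∈ J₁, b * u * b⁻¹ ∈ J₁ :=
    conj_sup (X_conj hB2 _) (conj_inf (X_conj hB2 _) (Y_conj hB1 _))
  have cH₁ : ∀ b ∈ B, ∀ u ∈ H₁, b * u * b⁻¹ ∈ H₁ :=
    conj_sup (X_conj hB2 _) (conj_inf (X_conj hB2 _) (Y_conj hB1 _))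
  have cJ₂ : ∀ b ∈ B, ∀ u ∈ J₂, b * u * b⁻¹ ∈ J₂ :=
    conj_sup (X_conj hB2 _) (conj_inf (X_conj hB2 _) (Y_conj hB1 _))
  have cH₂ : ∀ b ∈ B, ∀ u ∈ H₂, b * u * b⁻¹ ∈ H₂ :=
    conj_sup (X_conj hB2 _) (conj_inf (X_conj hB2 _) (Y_conj hB1 _))
  have leB₁ : H₁ ≤ B := sup_le (X_le_B _) (le_trans inf_le_left (X_le_B _))
  have leB₂ : H₂ ≤ B := sup_le (X_le_B _) (le_trans inf_le_left (X_le_B _))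
  have hJH₁ : J₁ ≤ H₁ :=
    sup_le le_sup_left (le_trans (inf_le_inf le_rfl (Y_mono (by omega))) le_sup_right)
  have hJH₂ : J₂ ≤ H₂ :=
    sup_le le_sup_left (le_trans (inf_le_inf le_rfl (Y_mono (by omega))) le_sup_right)
  have hJB₁ : J₁ ≤ B := le_trans hJH₁ leB₁
  have hJB₂ : J₂ ≤ B := le_trans hJH₂ leB₂
  haveI n₁ : (J₁.subgroupOf H₁).Normal := subgroupOf_normal_of_conj leB₁ cJ₁
  haveI n₂ : (J₂.subgroupOf H₂).Normal := subgroupOf_normal_of_conj leB₂ cJ₂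
  refine ⟨n₁, n₂, ?_⟩
  intro _ _
  haveI m₁ : (J₁.map (MonoidHom.snd S S)).Normal := map_normal_of_conj hJB₁ cJ₁ hB2
  haveI m₂ : (J₂.map (MonoidHom.fst S S)).Normal := map_normal_of_conj hJB₂ cJ₂ hB1
  have hH₁X : H₁ ≤ X B j := sup_le (X_mono (by omega)) inf_le_left
  have hker₁ : ∀ h ∈ H₁, (MonoidHom.snd S S) h ∈ J₁.map (MonoidHom.snd S S) → h ∈ J₁ := by
    intro h hh hmem
    obtain ⟨a, ha, ha2⟩ := hmem
    have ha2' : a.2 = h.2 := ha2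
    have hd : h * a⁻¹ ∈ X B j ⊓ Y B (k - m) := by
      refine Subgroup.mem_inf.mpr ⟨mul_mem (hH₁X hh) (inv_mem (hH₁X (hJH₁ ha))), ?_⟩
      apply Y_mono (show (0 : ℤ) ≤ k - m from hkm)
      rw [Y_nonneg le_rfl]
      refine Subgroup.mem_inf.mpr ⟨mul_mem (leB₁ hh) (inv_mem (leB₁ (hJH₁ ha))), ?_⟩
      show (h * a⁻¹).2 = 1
      simp [Prod.snd_mul, Prod.snd_inv, ha2']
    have hrw : h = (h * a⁻¹) * a := by group
    rw [hrw]
    exact mul_mem (Subgroup.mem_sup_right hd) ha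
  have hker₂ : ∀ h ∈ H₂, (MonoidHom.fst S S) h ∈ J₂.map (MonoidHom.fst S S) → h ∈ J₂ := by
    intro h hh hmem
    obtain ⟨a, ha, ha2⟩ := hmem
    have ha2' : a.1 = h.1 := ha2
    have hd : h * a⁻¹ ∈ X B j := by
      apply X_mono hj0
      rw [X_nonneg le_rfl]
      refine Subgroup.mem_inf.mpr ⟨mul_mem (leB₂ hh) (inv_mem (leB₂ (hJH₂ ha))), ?_⟩
      show (h * a⁻¹).1 = 1
      simp [Prod.fst_mul, Prod.fst_inv, ha2']
    have hrw : h = (h * a⁻¹) * a := by group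
    rw [hrw]
    exact mul_mem (Subgroup.mem_sup_left hd) ha
  have h1 : (X B j).map (MonoidHom.fst S S) = (X B (j - 1)).map (MonoidHom.snd S S) := by
    have := map_fst_X hB1 (j - 1)
    rwa [sub_add_cancel] at this
  have hH : H₂.map (MonoidHom.fst S S) = H₁.map (MonoidHom.snd S S) := by
    rw [hH₁def, hH₂def, Subgroup.map_sup, Subgroup.map_sup, h1,
      map_cross_int j k hj0 (by omega)]
  have hJ : J₂.map (MonoidHom.fst S S) = J₁.map (MonoidHom.snd S S) := by
    rw [hJ₁def, hJ₂def, Subgroup.map_sup, Subgroup.map_sup, h1,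
      map_cross_int j (k - m) hj0 hkm]
  have e₁ := quotEquivMap' (MonoidHom.snd S S) J₁ H₁
    (J₁.map (MonoidHom.snd S S)) (H₁.map (MonoidHom.snd S S)) rfl rfl hJH₁ hker₁
  have e₂ := quotEquivMap' (MonoidHom.fst S S) J₂ H₂
    (J₁.map (MonoidHom.snd S S)) (H₁.map (MonoidHom.snd S S)) hH hJ hJH₂ hker₂
  exact ⟨e₁.some.trans e₂.some.symm⟩


end GroupCodes
end

section
/- Fix an integer j ≥ 0 and let J ≤ H be subgroups of X_j. For a subgroup U ≤ X_j define U ⨝ N(U) = {(b, b') ∈ B × B : b ∈ U, b' ∈ N(U), b⁺ = b'⁻}. Then: (a) J ⨝ N(J) and H ⨝ N(H) are subgroups of the direct product B × B with J ⨝ N(J) ≤ H ⨝ N(H); (b) J is a normal subgroup of H if and only if J ⨝ N(J) is a normal subgroup of H ⨝ N(H); and (c) when J is normal in H, there is a group isomorphism H / J ≅ (H ⨝ N(H)) / (J ⨝ N(J)). -/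
open Pointwise

namespace GroupCodes

variable {S : Type*} [Group S]

/-!
Projection onto the first branch, `(b, b') ↦ b`, maps `H ⨝ N(H)` onto `H`: every state `b⁺` is
the left state of some branch of `B`, which then lies in `N(H)`. Moreover `J ⨝ N(J)` is exactly
the preimage of `J`, because `b ∈ J` already puts `b'` in `N(J)`. Normality and the quotient
therefore transfer along this surjection.
-/

section QuotientComap

variable {G G' : Type*} [Group G] [Group G']

noncomputable def quotientComapEquivOfSurjective {f : G →* G'} (hf : Function.Surjective f)
    (K : Subgroup G') [K.Normal] : G ⧸ K.comap f ≃* G' ⧸ K :=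
  (QuotientGroup.quotientMulEquivOfEq (by rw [← MonoidHom.comap_ker, QuotientGroup.ker_mk'])).trans
    (QuotientGroup.quotientKerEquivOfSurjective ((QuotientGroup.mk' K).comp f)
      ((QuotientGroup.mk'_surjective K).comp hf))

end QuotientComap

lemma Xnat_le (B : Subgroup (S × S)) (n : ℕ) : Xnat B n ≤ B := by
  cases n <;> exact inf_le_left

lemma X_le (B : Subgroup (S × S)) (i : ℤ) : X B i ≤ B := by
  unfold X
  split
  · exact bot_le
  · exact Xnat_le B _

lemma N_mono (B : Subgroup (S × S)) {J H : Subgroup (S × S)} (hJH : J ≤ H) :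
    N B J ≤ N B H :=
  inf_le_inf_left B (Subgroup.comap_mono (Subgroup.map_mono hJH))

lemma joinN_mono (B : Subgroup (S × S)) {J H : Subgroup (S × S)} (hJH : J ≤ H) :
    JoinN B J ≤ JoinN B H := fun _ ⟨hU, hN, hstate⟩ => ⟨hJH hU, N_mono B hJH hN, hstate⟩

lemma joinN_le_prod {B H : Subgroup (S × S)} (hHB : H ≤ B) : JoinN B H ≤ B.prod B :=
  fun _ ⟨hU, hN, _⟩ => ⟨hHB hU, hN.1⟩

def joinNFst (B H : Subgroup (S × S)) : JoinN B H →* H where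
  toFun p := ⟨p.val.1, p.2.1⟩
  map_one' := rfl
  map_mul' _ _ := rfl

lemma joinNFst_surjective {B : Subgroup (S × S)} (hB1 : Subgroup.map (MonoidHom.fst S S) B = ⊤)
    (H : Subgroup (S × S)) : Function.Surjective (joinNFst B H) := by
  rintro ⟨h, hh⟩
  obtain ⟨b', hb', hstate⟩ : h.2 ∈ Subgroup.map (MonoidHom.fst S S) B := hB1 ▸ Subgroup.mem_top _
  exact ⟨⟨(h, b'), hh, ⟨hb', h, hh, hstate.symm⟩, hstate.symm⟩, rfl⟩

lemma subgroupOf_joinN_eq_comap (B J H : Subgroup (S × S)) :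
    (JoinN B J).subgroupOf (JoinN B H) = (J.subgroupOf H).comap (joinNFst B H) := by
  ext ⟨p, -, hN, hstate⟩
  simp only [Subgroup.mem_subgroupOf, Subgroup.mem_comap]
  exact ⟨fun h => h.1, fun hJ => ⟨hJ, ⟨hN.1, p.1, hJ, hstate⟩, hstate⟩⟩

theorem join_next_branch_quot_iso_general
    (B : Subgroup (S × S))
    (hB1 : Subgroup.map (MonoidHom.fst S S) B = ⊤)
    (j : ℤ)
    (J H : Subgroup (S × S))
    (hJH : J ≤ H) (hHX : H ≤ X B j) :
    (JoinN B J ≤ JoinN B H ∧ JoinN B H ≤ B.prod B) ∧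
    ((J.subgroupOf H).Normal ↔ ((JoinN B J).subgroupOf (JoinN B H)).Normal) ∧
    ((J.subgroupOf H).Normal → IsQuotIso J H (JoinN B J) (JoinN B H)) := by
  have hsurj := joinNFst_surjective hB1 H
  have hnormal : (J.subgroupOf H).Normal ↔ ((JoinN B J).subgroupOf (JoinN B H)).Normal := by
    rw [subgroupOf_joinN_eq_comap B J H, Subgroup.normal_comap_iff_of_surjective hsurj]
  refine ⟨⟨joinN_mono B hJH, joinN_le_prod (hHX.trans (X_le B j))⟩, hnormal,
    fun hn => ⟨hn, hnormal.mp hn, ⟨?_⟩⟩⟩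
  exact ((QuotientGroup.quotientMulEquivOfEq (subgroupOf_joinN_eq_comap B J H)).trans
    (quotientComapEquivOfSurjective hsurj _)).symm

/-- for `J ≤ H ≤ X_j`: (a) `J ⨝ N(J) ≤ H ⨝ N(H)` are subgroups of `B × B`;
(b) `J ⊴ H` iff `J ⨝ N(J) ⊴ H ⨝ N(H)`; (c) if `J ⊴ H`, then
`H / J ≅ (H ⨝ N(H)) / (J ⨝ N(J))`. -/
theorem join_next_branch_quot_iso
    (B : Subgroup (S × S))
    (hB1 : Subgroup.map (MonoidHom.fst S S) B = ⊤)
    (hB2 : Subgroup.map (MonoidHom.snd S S) B = ⊤)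
    (j : ℤ) (hj : 0 ≤ j)
    (J H : Subgroup (S × S))
    (hJH : J ≤ H) (hHX : H ≤ X B j) :
    (JoinN B J ≤ JoinN B H ∧ JoinN B H ≤ B.prod B) ∧
    ((J.subgroupOf H).Normal ↔ ((JoinN B J).subgroupOf (JoinN B H)).Normal) ∧
    ((J.subgroupOf H).Normal → IsQuotIso J H (JoinN B J) (JoinN B H)) :=
  join_next_branch_quot_iso_general B hB1 j J H hJH hHX

end GroupCodes
end

section
/- Let ℓ ≥ 1 be an integer. Fix j with 0 ≤ j ≤ ℓ and let Y' ≤ Y'' be subgroups of B with Y'' ≤ Y_{ℓ-j}. Set J = X_{j-1}(X_j ∩ Y'), H = X_{j-1}(X_j ∩ Y''), and D = (X_j ∩ Y')(X_{j-1} ∩ Y''). Then J and H are subgroups of X_j with J ≤ H, D = J ∩ (X_j ∩ Y''), H = J·(X_j ∩ Y''), and the inclusion of X_j ∩ Y'' into H induces a bijection between the right cosets of D in X_j ∩ Y'' and the right cosets of J in H; consequently a right transversal of J in H can be chosen consisting of elements of X_j ∩ Y'', one from each right coset of D in X_j ∩ Y''. -/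
open Pointwise

namespace GroupCodes

variable {S : Type*} [Group S]

/-!
Everything follows from two facts about a subgroup `A` normalized by a subgroup `C`: the join
`A ⊔ C` is the product set `A * C`, and for `C' ≤ C` the modular law
`C' ⊔ (A ⊓ C) = (A ⊔ C') ⊓ C` holds. Hence a right coset of `A ⊔ C'` inside `A ⊔ C` meets `C`,
and it meets `C` in exactly one right coset of `(A ⊔ C') ⊓ C`, so a right transversal of the
latter in `C` is one of `A ⊔ C'` in `A ⊔ C`. Here `A = X_{j-1}`, which is normalized by `X_j`:
for `b ∈ X_{n+2}` pick `c ∈ X_{n+1}` with `c⁺ = b⁻`, then conjugation by `b` on first coordinates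
is conjugation by `c` on second coordinates, and `c` normalizes `X_n` by induction.
-/

section NormalizedJoin

open Subgroup

variable {G : Type*} [Group G] {A C C' : Subgroup G}

theorem mem_sup_iff_exists_mul_of_le_normalizer (hC : C ≤ normalizer (A : Set G))
    {g : G} : g ∈ A ⊔ C ↔ ∃ a ∈ A, ∃ c ∈ C, a * c = g := by
  rw [← SetLike.mem_coe, coe_mul_of_right_le_normalizer_left A C hC, Set.mem_mul]
  rfl

theorem exists_mul_inv_mem_of_mem_sup_of_le_normalizer (hC : C ≤ normalizer (A : Set G))
    {g : G} (hg : g ∈ A ⊔ C) : ∃ c ∈ C, c * g⁻¹ ∈ A := by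
  obtain ⟨a, ha, c, hc, rfl⟩ := (mem_sup_iff_exists_mul_of_le_normalizer hC).mp hg
  exact ⟨c, hc, by simpa using inv_mem ha⟩

theorem sup_inf_eq_inf_of_le_normalizer (hC : C ≤ normalizer (A : Set G))
    (hC' : C' ≤ C) :
    C' ⊔ A ⊓ C = (A ⊔ C') ⊓ C := by
  refine le_antisymm (sup_le (le_inf le_sup_right hC') (inf_le_inf_right C le_sup_left)) ?_
  intro g hg
  obtain ⟨hg, hgC⟩ := mem_inf.mp hg
  obtain ⟨a, ha, c, hc, rfl⟩ :=
    (mem_sup_iff_exists_mul_of_le_normalizer (hC'.trans hC)).mp hg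
  have haC : a ∈ C := by simpa using mul_mem hgC (inv_mem (hC' hc))
  exact mul_mem (mem_sup_right (mem_inf.mpr ⟨ha, haC⟩)) (mem_sup_left hc)

end NormalizedJoin

section Transversal

open Subgroup

variable {G : Type*} [Group G]

theorem exists_isRightTransversalIn {D C : Subgroup G} (hDC : D ≤ C) :
    ∃ T, IsRightTransversalIn D C T := by
  obtain ⟨R, hR, -⟩ := D.exists_isComplement_right 1
  rw [isComplement_iff_existsUnique_mul_inv_mem] at hR
  refine ⟨R ∩ C, Set.inter_subset_right, fun g hg => ?_⟩
  obtain ⟨⟨t, htR⟩, ht, huniq⟩ := hR g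
  have htC : t ∈ C := by simpa using mul_mem (inv_mem (hDC ht)) hg
  refine ⟨t, ⟨⟨htR, htC⟩, by simpa using inv_mem ht⟩, ?_⟩
  rintro t' ⟨⟨ht'R, -⟩, ht'⟩
  exact congrArg Subtype.val (huniq ⟨t', ht'R⟩ (by simpa using inv_mem ht'))

theorem IsRightTransversalIn.of_inf {J H C : Subgroup G} {T : Set G} (hCH : C ≤ H)
    (hmeet : ∀ h ∈ H, ∃ c ∈ C, c * h⁻¹ ∈ J) (hT : IsRightTransversalIn (J ⊓ C) C T) :
    IsRightTransversalIn J H T := by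
  obtain ⟨hTC, huniq⟩ := hT
  refine ⟨hTC.trans hCH, fun h hh => ?_⟩
  obtain ⟨c, hc, hch⟩ := hmeet h hh
  obtain ⟨t, ⟨htT, htc⟩, ht_unique⟩ := huniq c hc
  refine ⟨t, ⟨htT, by simpa [mul_assoc] using mul_mem (mem_inf.mp htc).1 hch⟩, ?_⟩
  rintro t' ⟨ht'T, ht'h⟩
  refine ht_unique t' ⟨ht'T, mem_inf.mpr ⟨?_, mul_mem (hTC ht'T) (inv_mem hc)⟩⟩
  simpa [mul_assoc] using mul_mem ht'h (inv_mem hch)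

end Transversal

section Trellis

open Subgroup

theorem Xnat_le_Xnat_succ (B : Subgroup (S × S)) : ∀ n, Xnat B n ≤ Xnat B (n + 1)
  | 0 => fun _ hx => ⟨hx.1, 1, one_mem _, hx.2.symm⟩
  | n + 1 => inf_le_inf_left _ (comap_mono (map_mono (Xnat_le_Xnat_succ B n)))

theorem Xnat_succ_le_normalizer (B : Subgroup (S × S)) :
    ∀ n, Xnat B (n + 1) ≤ normalizer (Xnat B n : Set (S × S))
  | 0 => by
    rw [le_normalizer_iff]
    intro b hb x hx
    simp only [Xnat, mem_inf, MonoidHom.mem_ker, MonoidHom.coe_fst] at hb hx ⊢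
    refine ⟨mul_mem (mul_mem hb.1 hx.1) (inv_mem hb.1), ?_⟩
    simp [hx.2]
  | n + 1 => by
    rw [le_normalizer_iff]
    intro b hb x hx
    simp only [Xnat, mem_inf, mem_comap, mem_map] at hb hx ⊢
    obtain ⟨hb, c, hc, hcb⟩ := hb
    obtain ⟨hx, u, hu, hux⟩ := hx
    refine ⟨mul_mem (mul_mem hb hx) (inv_mem hb), c * u * c⁻¹, ?_, ?_⟩
    · exact le_normalizer_iff.mp (Xnat_succ_le_normalizer B n) c hc u hu
    · simp_all

theorem X_natCast (B : Subgroup (S × S)) (n : ℕ) : X B n = Xnat B n := by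
  simp [X]

theorem X_of_neg (B : Subgroup (S × S)) {i : ℤ} (hi : i < 0) : X B i = ⊥ :=
  if_pos hi

theorem X_sub_one_le (B : Subgroup (S × S)) (j : ℤ) : X B (j - 1) ≤ X B j := by
  rcases lt_or_ge j 1 with hj | hj
  · rw [X_of_neg B (by omega : j - 1 < 0)]
    exact bot_le
  · obtain ⟨n, rfl⟩ : ∃ n : ℕ, j = n + 1 := ⟨(j - 1).toNat, by omega⟩
    rw [add_sub_cancel_right, X_natCast, ← Nat.cast_succ, X_natCast]
    exact Xnat_le_Xnat_succ B n

theorem X_le_normalizer_X_sub_one (B : Subgroup (S × S)) (j : ℤ) :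
    X B j ≤ normalizer (X B (j - 1) : Set (S × S)) := by
  rcases lt_or_ge j 1 with hj | hj
  · rw [X_of_neg B (by omega : j - 1 < 0)]
    exact le_normalizer_of_normal
  · obtain ⟨n, rfl⟩ : ∃ n : ℕ, j = n + 1 := ⟨(j - 1).toNat, by omega⟩
    rw [add_sub_cancel_right, X_natCast, ← Nat.cast_succ, X_natCast]
    exact Xnat_succ_le_normalizer B n

end Trellis

theorem transversal_from_intersection_general
    (B : Subgroup (S × S))
    (j : ℤ)
    (Y' Y'' : Subgroup (S × S))
    (hY'Y'' : Y' ≤ Y'') :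
    (X B (j - 1) ⊔ (X B j ⊓ Y')) ≤ X B j ∧
    (X B (j - 1) ⊔ (X B j ⊓ Y'')) ≤ X B j ∧
    (X B (j - 1) ⊔ (X B j ⊓ Y')) ≤ (X B (j - 1) ⊔ (X B j ⊓ Y'')) ∧
    ((X B j ⊓ Y') ⊔ (X B (j - 1) ⊓ Y''))
      = (X B (j - 1) ⊔ (X B j ⊓ Y')) ⊓ (X B j ⊓ Y'') ∧
    (X B (j - 1) ⊔ (X B j ⊓ Y''))
      = (X B (j - 1) ⊔ (X B j ⊓ Y')) ⊔ (X B j ⊓ Y'') ∧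
    (∀ h ∈ X B (j - 1) ⊔ (X B j ⊓ Y''),
      ∃ s ∈ X B j ⊓ Y'', s * h⁻¹ ∈ X B (j - 1) ⊔ (X B j ⊓ Y')) ∧
    (∀ s ∈ X B j ⊓ Y'', ∀ s' ∈ X B j ⊓ Y'',
      (s * s'⁻¹ ∈ X B (j - 1) ⊔ (X B j ⊓ Y') ↔
        s * s'⁻¹ ∈ (X B j ⊓ Y') ⊔ (X B (j - 1) ⊓ Y''))) ∧
    ∃ T : Set (S × S), T ⊆ (↑(X B j ⊓ Y'') : Set (S × S)) ∧
      IsRightTransversalIn (X B (j - 1) ⊔ (X B j ⊓ Y'))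
        (X B (j - 1) ⊔ (X B j ⊓ Y'')) T ∧
      IsRightTransversalIn ((X B j ⊓ Y') ⊔ (X B (j - 1) ⊓ Y'')) (X B j ⊓ Y'') T := by
  have hA : X B (j - 1) ≤ X B j := X_sub_one_le B j
  have hC : X B j ⊓ Y'' ≤ Subgroup.normalizer (X B (j - 1) : Set (S × S)) :=
    inf_le_left.trans (X_le_normalizer_X_sub_one B j)
  have hC' : X B j ⊓ Y' ≤ X B j ⊓ Y'' := inf_le_inf_left _ hY'Y''
  have hD : X B j ⊓ Y' ⊔ X B (j - 1) ⊓ Y'' =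
      (X B (j - 1) ⊔ X B j ⊓ Y') ⊓ (X B j ⊓ Y'') := by
    rw [← sup_inf_eq_inf_of_le_normalizer hC hC', ← inf_assoc, inf_eq_left.mpr hA]
  have hmeet : ∀ h ∈ X B (j - 1) ⊔ (X B j ⊓ Y''),
      ∃ s ∈ X B j ⊓ Y'', s * h⁻¹ ∈ X B (j - 1) ⊔ (X B j ⊓ Y') := fun h hh =>
    let ⟨s, hs, hsh⟩ := exists_mul_inv_mem_of_mem_sup_of_le_normalizer hC hh
    ⟨s, hs, Subgroup.mem_sup_left hsh⟩
  obtain ⟨T, hT⟩ := exists_isRightTransversalIn (hD.trans_le inf_le_right)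
  refine ⟨sup_le hA inf_le_left, sup_le hA inf_le_left, sup_le_sup_left hC' _, hD,
    by rw [sup_assoc, sup_eq_right.mpr hC'], hmeet, fun s hs s' hs' => ?_, T, hT.1,
    (hD ▸ hT).of_inf le_sup_right hmeet, hT⟩
  rw [hD, Subgroup.mem_inf]
  exact ⟨fun hJ => ⟨hJ, mul_mem hs (inv_mem hs')⟩, And.left⟩

/-- for `Y' ≤ Y'' ≤ Y_{ℓ-j}`, with `J = X_{j-1}(X_j ∩ Y')`,
`H = X_{j-1}(X_j ∩ Y'')`, `D = (X_j ∩ Y')(X_{j-1} ∩ Y'')` (products realized as joins):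
`J ≤ H ≤ X_j`, `D = J ∩ (X_j ∩ Y'')`, `H = J ⬝ (X_j ∩ Y'')`, inclusion induces a bijection
between right cosets of `D` in `X_j ∩ Y''` and right cosets of `J` in `H`, and a right
transversal of `J` in `H` may be chosen inside `X_j ∩ Y''`, transversal to `D` as well. -/
theorem transversal_from_intersection
    (B : Subgroup (S × S))
    (hB1 : Subgroup.map (MonoidHom.fst S S) B = ⊤)
    (hB2 : Subgroup.map (MonoidHom.snd S S) B = ⊤)
    (ℓ : ℤ) (hℓ : 1 ≤ ℓ)
    (j : ℤ) (hj0 : 0 ≤ j) (hjℓ : j ≤ ℓ)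
    (Y' Y'' : Subgroup (S × S)) (hY'B : Y' ≤ B) (hY''B : Y'' ≤ B)
    (hY'Y'' : Y' ≤ Y'') (hY'' : Y'' ≤ Y B (ℓ - j)) :
    (X B (j - 1) ⊔ (X B j ⊓ Y')) ≤ X B j ∧
    (X B (j - 1) ⊔ (X B j ⊓ Y'')) ≤ X B j ∧
    (X B (j - 1) ⊔ (X B j ⊓ Y')) ≤ (X B (j - 1) ⊔ (X B j ⊓ Y'')) ∧
    ((X B j ⊓ Y') ⊔ (X B (j - 1) ⊓ Y''))
      = (X B (j - 1) ⊔ (X B j ⊓ Y')) ⊓ (X B j ⊓ Y'') ∧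
    (X B (j - 1) ⊔ (X B j ⊓ Y''))
      = (X B (j - 1) ⊔ (X B j ⊓ Y')) ⊔ (X B j ⊓ Y'') ∧
    (∀ h ∈ X B (j - 1) ⊔ (X B j ⊓ Y''),
      ∃ s ∈ X B j ⊓ Y'', s * h⁻¹ ∈ X B (j - 1) ⊔ (X B j ⊓ Y')) ∧
    (∀ s ∈ X B j ⊓ Y'', ∀ s' ∈ X B j ⊓ Y'',
      (s * s'⁻¹ ∈ X B (j - 1) ⊔ (X B j ⊓ Y') ↔
        s * s'⁻¹ ∈ (X B j ⊓ Y') ⊔ (X B (j - 1) ⊓ Y''))) ∧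
    ∃ T : Set (S × S), T ⊆ (↑(X B j ⊓ Y'') : Set (S × S)) ∧
      IsRightTransversalIn (X B (j - 1) ⊔ (X B j ⊓ Y'))
        (X B (j - 1) ⊔ (X B j ⊓ Y'')) T ∧
      IsRightTransversalIn ((X B j ⊓ Y') ⊔ (X B (j - 1) ⊓ Y'')) (X B j ⊓ Y'') T :=
  transversal_from_intersection_general B j Y' Y'' hY'Y''

end GroupCodes
end
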